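/- arXiv:2205.12953 — 4 statements merged into one kernel-verified Lean document; each statement's English description precedes it below -/
import Mathlib

section
/- Let k be a field and P, Q ∈ k[x₁,…,xₙ] polynomials. Suppose P is irreducible and vanishes at the origin (i.e. P(0,…,0) = 0). If P divides Q in the formal power series ring k[[x₁,…,xₙ]], then P already divides Q in k[x₁,…,xₙ]. -/
/-!
Truncation at total degree `N` is a ring map `k⟦x⟧ → k[x] ⧸ 𝔪 ^ N`, where `𝔪 = (x₁, …, xₙ)`,
extending the projection of `k[x]`; so `P` divides `Q` modulo `𝔪 ^ N` for every `N`. Hence the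
image of `Q` in the Noetherian domain `k[x] ⧸ (P)` lies in `⋂ N, (𝔪 ⧸ (P)) ^ N`, which is zero by
Krull's intersection theorem because `P(0) = 0` makes `𝔪 + (P)` a proper ideal.
-/

open MvPolynomial

namespace Ideal

variable {R : Type*} [CommRing R]

theorem exists_sub_mul_mem_of_mk_dvd_mk {I : Ideal R} {a b : R}
    (h : Quotient.mk I a ∣ Quotient.mk I b) : ∃ c, b - a * c ∈ I := by
  obtain ⟨d, hd⟩ := h
  obtain ⟨c, rfl⟩ := Quotient.mk_surjective d
  exact ⟨c, Quotient.eq.1 (by rw [hd, map_mul])⟩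

theorem dvd_of_forall_mk_pow_dvd_mk [IsNoetherianRing R] {p a : R} (hp : Prime p) {I : Ideal R}
    (hI : span {p} ⊔ I ≠ ⊤) (h : ∀ N, Quotient.mk (I ^ N) p ∣ Quotient.mk (I ^ N) a) :
    p ∣ a := by
  have : (span {p}).IsPrime := (span_singleton_prime hp.ne_zero).2 hp
  set π := Quotient.mk (span {p})
  have hne : I.map π ≠ ⊤ := fun htop => hI (by rw [← comap_map_quotientMk, htop, comap_top])
  have ha : π a ∈ ⨅ N : ℕ, I.map π ^ N := by
    refine Submodule.mem_iInf _ |>.2 fun N => ?_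
    obtain ⟨c, hc⟩ := exists_sub_mul_mem_of_mk_dvd_mk (h N)
    have hpc : π (p * c) = 0 :=
      Quotient.eq_zero_iff_mem.2 (mem_span_singleton.2 (dvd_mul_right p c))
    rw [← Ideal.map_pow]
    simpa [hpc] using mem_map_of_mem π hc
  rw [iInf_pow_eq_bot_of_isDomain _ hne, mem_bot] at ha
  exact mem_span_singleton.1 (Quotient.eq_zero_iff_mem.1 ha)

end Ideal

namespace MvPolynomial

variable {σ R : Type*} [CommRing R]

theorem mk_pow_idealOfVars_dvd_of_coe_dvd [Finite σ] {p q : MvPolynomial σ R}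
    (h : (p : MvPowerSeries σ R) ∣ q) (N : ℕ) :
    Ideal.Quotient.mk (idealOfVars σ R ^ N) p ∣ Ideal.Quotient.mk (idealOfVars σ R ^ N) q := by
  have hcoe (r : MvPolynomial σ R) :
      MvPowerSeries.truncTotalAlgHom σ R N r = Ideal.Quotient.mk _ r := by
    rw [← Ideal.Quotient.algebraMap_eq, ← (MvPowerSeries.truncTotalAlgHom σ R N).commutes r]
    simp [MvPowerSeries.algebraMap_apply']
  simpa only [hcoe] using map_dvd (MvPowerSeries.truncTotalAlgHom σ R N) h

theorem span_singleton_sup_idealOfVars_ne_top [Nontrivial R] {p : MvPolynomial σ R}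
    (hp : eval 0 p = 0) : Ideal.span {p} ⊔ idealOfVars σ R ≠ ⊤ := by
  refine ne_top_of_le_ne_top (RingHom.ker_ne_top (eval (0 : σ → R))) (sup_le ?_ ?_)
  · simpa [Ideal.span_le, RingHom.mem_ker] using hp
  · simp [Ideal.span_le, Set.range_subset_iff, RingHom.mem_ker]

end MvPolynomial

/-- If `P` is an irreducible polynomial vanishing at the origin and `P` divides `Q`
in the formal power series ring, then `P` divides `Q` in the polynomial ring. -/
theorem poly_dvd_of_powerSeries_dvd {k : Type*} [Field k] {n : ℕ}
    (P Q : MvPolynomial (Fin n) k)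
    (hirr : Irreducible P)
    (hvan : MvPolynomial.eval (0 : Fin n → k) P = 0)
    (hdvd : (P : MvPowerSeries (Fin n) k) ∣ (Q : MvPowerSeries (Fin n) k)) :
    P ∣ Q :=
  Ideal.dvd_of_forall_mk_pow_dvd_mk hirr.prime (span_singleton_sup_idealOfVars_ne_top hvan)
    (mk_pow_idealOfVars_dvd_of_coe_dvd hdvd)
end

section
/- Let r ≥ 1 and 0 ≤ k < r be integers. Then there is a unique tuple (k₁,…,k_r) ∈ ℤ^r with ∑ k_i = k satisfying ∑_{1≤i<j≤r} [(k_i − k_j)² + (k_i − k_j)] = 0; it is the tuple with k_i = 0 for i ≤ r−k and k_i = 1 for i > r−k. Moreover, for every tuple with ∑ k_i = k this sum is a nonnegative even integer. -/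
/-!
Each summand `d ^ 2 + d = d * (d + 1)` is a nonnegative even integer, vanishing exactly for
`d ∈ {0, -1}`. So the sum vanishes iff `t` is a staircase: nondecreasing with `t j ≤ t i + 1` for
all `i, j`. Two staircases with `t i > c i` satisfy `t ≥ c` everywhere, so a staircase is
determined by its sum; the step tuple `0, …, 0, 1, …, 1` is a staircase with sum `k`.
-/

open Finset

lemma sq_add_self_nonneg (d : ℤ) : 0 ≤ d ^ 2 + d := by
  rcases le_or_gt 0 d with h | h <;> nlinarith

lemma sq_add_self_eq_zero_iff {d : ℤ} : d ^ 2 + d = 0 ↔ d = 0 ∨ d = -1 := by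
  rw [show d ^ 2 + d = d * (d + 1) by ring, mul_eq_zero, add_eq_zero_iff_eq_neg]

section Staircase

variable {ι : Type*} [LinearOrder ι]

def pairDiffSum [Fintype ι] (t : ι → ℤ) : ℤ :=
  ∑ p ∈ univ.filter (fun p : ι × ι => p.1 < p.2), ((t p.1 - t p.2) ^ 2 + (t p.1 - t p.2))

def IsStaircase (t : ι → ℤ) : Prop :=
  Monotone t ∧ ∀ i j, t i ≤ t j + 1

theorem IsStaircase.le_of_lt {t c : ι → ℤ} (ht : IsStaircase t) (hc : IsStaircase c) {i : ι}
    (hi : c i < t i) : c ≤ t := by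
  intro j
  rcases le_total i j with hij | hji
  · linarith [ht.1 hij, hc.2 j i]
  · linarith [hc.1 hji, ht.2 i j]

theorem IsStaircase.eq_of_sum_eq [Fintype ι] {t c : ι → ℤ} (ht : IsStaircase t)
    (hc : IsStaircase c) (hsum : ∑ i, t i = ∑ i, c i) : t = c := by
  by_contra hne
  obtain ⟨i, hi⟩ := Function.ne_iff.1 hne
  rcases hi.lt_or_gt with hlt | hlt
  · exact (sum_lt_sum (fun j _ => hc.le_of_lt ht hlt j) ⟨i, mem_univ i, hlt⟩).ne hsum
  · exact (sum_lt_sum (fun j _ => ht.le_of_lt hc hlt j) ⟨i, mem_univ i, hlt⟩).ne' hsum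

variable [Fintype ι]

theorem pairDiffSum_nonneg (t : ι → ℤ) : 0 ≤ pairDiffSum t :=
  sum_nonneg fun _ _ => sq_add_self_nonneg _

theorem two_dvd_pairDiffSum (t : ι → ℤ) : 2 ∣ pairDiffSum t :=
  dvd_sum fun p _ => by
    simpa only [sq, mul_add_one] using Int.two_dvd_mul_add_one (t p.1 - t p.2)

theorem pairDiffSum_eq_zero_iff {t : ι → ℤ} : pairDiffSum t = 0 ↔ IsStaircase t := by
  have hterm : ∀ i j, (t i - t j) ^ 2 + (t i - t j) = 0 ↔ t i ≤ t j ∧ t j ≤ t i + 1 :=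
    fun i j => by rw [sq_add_self_eq_zero_iff]; omega
  rw [pairDiffSum, sum_eq_zero_iff_of_nonneg fun _ _ => sq_add_self_nonneg _]
  simp only [mem_filter, mem_univ, true_and, Prod.forall]
  constructor
  · intro h
    have hmono : Monotone t := fun i j hij => by
      rcases hij.lt_or_eq with hlt | rfl
      exacts [((hterm i j).1 (h i j hlt)).1, le_rfl]
    refine ⟨hmono, fun i j => ?_⟩
    rcases lt_or_ge j i with hlt | hle
    exacts [((hterm j i).1 (h j i hlt)).2, by linarith [hmono hle]]
  · intro h i j hij
    exact (hterm i j).2 ⟨h.1 hij.le, h.2 j i⟩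

end Staircase

theorem isStaircase_fin_ite_val_lt {r : ℕ} (m : ℕ) :
    IsStaircase (fun i : Fin r => if (i : ℕ) < m then (0 : ℤ) else 1) := by
  refine ⟨fun i j hij => ?_, fun i j => ?_⟩
  · have : (i : ℕ) ≤ j := hij
    dsimp only
    split_ifs <;> omega
  · dsimp only
    split_ifs <;> norm_num

theorem sum_fin_ite_val_lt {r m : ℕ} (hm : m ≤ r) :
    ∑ i : Fin r, (if (i : ℕ) < m then (0 : ℤ) else 1) = (r - m : ℕ) := by
  have hcard := card_filter_add_card_filter_not (s := univ) (fun i : Fin r => (i : ℕ) < m)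
  rw [Fin.card_filter_val_lt, card_univ, Fintype.card_fin, min_eq_right hm] at hcard
  rw [sum_ite, sum_const_zero, zero_add, sum_const, nsmul_one]
  congr 1
  omega

theorem unique_minimal_tuple_general (r k : ℕ) (hk : k < r) :
    (∀ t : Fin r → ℤ, (∑ i, t i) = (k : ℤ) →
        0 ≤ (∑ p ∈ Finset.univ.filter (fun p : Fin r × Fin r => p.1 < p.2),
              ((t p.1 - t p.2) ^ 2 + (t p.1 - t p.2)))
        ∧ 2 ∣ (∑ p ∈ Finset.univ.filter (fun p : Fin r × Fin r => p.1 < p.2),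
              ((t p.1 - t p.2) ^ 2 + (t p.1 - t p.2)))) ∧
    (∃! t : Fin r → ℤ, (∑ i, t i) = (k : ℤ) ∧
        (∑ p ∈ Finset.univ.filter (fun p : Fin r × Fin r => p.1 < p.2),
            ((t p.1 - t p.2) ^ 2 + (t p.1 - t p.2))) = 0) ∧
    ((∑ i, (fun i : Fin r => if (i : ℕ) < r - k then (0 : ℤ) else 1) i) = (k : ℤ) ∧
      (∑ p ∈ Finset.univ.filter (fun p : Fin r × Fin r => p.1 < p.2),
          (((if ((p.1 : ℕ) < r - k) then (0:ℤ) else 1) - (if ((p.2 : ℕ) < r - k) then (0:ℤ) else 1)) ^ 2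
            + ((if ((p.1 : ℕ) < r - k) then (0:ℤ) else 1) - (if ((p.2 : ℕ) < r - k) then (0:ℤ) else 1)))) = 0) := by
  set step : Fin r → ℤ := fun i => if (i : ℕ) < r - k then 0 else 1
  have hstep : IsStaircase step := isStaircase_fin_ite_val_lt (r - k)
  have hsum : ∑ i, step i = k := by
    rw [sum_fin_ite_val_lt (Nat.sub_le r k), Nat.sub_sub_self hk.le]
  have hzero : pairDiffSum step = 0 := pairDiffSum_eq_zero_iff.2 hstep
  refine ⟨fun t _ => ⟨pairDiffSum_nonneg t, two_dvd_pairDiffSum t⟩,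
    ⟨step, ⟨hsum, hzero⟩, fun t ⟨ht, htzero⟩ => ?_⟩, hsum, hzero⟩
  exact (pairDiffSum_eq_zero_iff.1 htzero).eq_of_sum_eq hstep (ht.trans hsum.symm)

/-- For `0 ≤ k < r`: the sum `∑_{i<j} [(k_i−k_j)² + (k_i−k_j)]` over tuples with
`∑ k_i = k` is a nonnegative even integer; it vanishes for a unique tuple, namely
`k_i = 0` for `i ≤ r−k` and `k_i = 1` for `i > r−k`. -/
theorem unique_minimal_tuple (r k : ℕ) (hr : 1 ≤ r) (hk : k < r) :
    (∀ t : Fin r → ℤ, (∑ i, t i) = (k : ℤ) →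
        0 ≤ (∑ p ∈ Finset.univ.filter (fun p : Fin r × Fin r => p.1 < p.2),
              ((t p.1 - t p.2) ^ 2 + (t p.1 - t p.2)))
        ∧ 2 ∣ (∑ p ∈ Finset.univ.filter (fun p : Fin r × Fin r => p.1 < p.2),
              ((t p.1 - t p.2) ^ 2 + (t p.1 - t p.2)))) ∧
    (∃! t : Fin r → ℤ, (∑ i, t i) = (k : ℤ) ∧
        (∑ p ∈ Finset.univ.filter (fun p : Fin r × Fin r => p.1 < p.2),
            ((t p.1 - t p.2) ^ 2 + (t p.1 - t p.2))) = 0) ∧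
    ((∑ i, (fun i : Fin r => if (i : ℕ) < r - k then (0 : ℤ) else 1) i) = (k : ℤ) ∧
      (∑ p ∈ Finset.univ.filter (fun p : Fin r × Fin r => p.1 < p.2),
          (((if ((p.1 : ℕ) < r - k) then (0:ℤ) else 1) - (if ((p.2 : ℕ) < r - k) then (0:ℤ) else 1)) ^ 2
            + ((if ((p.1 : ℕ) < r - k) then (0:ℤ) else 1) - (if ((p.2 : ℕ) < r - k) then (0:ℤ) else 1)))) = 0) :=
  unique_minimal_tuple_general r k hk
end

section
/- In the field of rational functions ℚ(t₁, t₂), for every integer m ≥ 0 one has (t₁^{−m} − t₁^{−m−1})/(1 − t₁^{−1} − t₁t₂^{−1} + t₂^{−1}) + (t₂^{−m} − t₂^{−m−1})/(1 − t₂^{−1} − t₂t₁^{−1} + t₁^{−1}) = (t₁t₂)^{−m} · ∑_{i=0}^{m} t₁^i t₂^{m−i}. -/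
/-!
With `x = t₁`, `y = t₂`, the common denominator factors as
`1 - x⁻¹ - x y⁻¹ + y⁻¹ = (x - 1)(y - x) / (x y)`, and the numerator `x⁻¹ ^ m (1 - x⁻¹)` supplies
the same factor `x - 1`; so each fixed point contributes `x⁻¹ ^ m * y / (y - x)`. The two
contributions add up to `(x y)⁻¹ ^ m (y ^ (m + 1) - x ^ (m + 1)) / (y - x)`, which is the
homogeneous geometric sum on the right-hand side.
-/

open Finset MvPolynomial

section Field

variable {K : Type*} [Field K]

theorem inv_pow_sub_inv_pow_succ_div (m : ℕ) {x y : K} (hx : x ≠ 0) (hy : y ≠ 0)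
    (hx1 : x ≠ 1) (hxy : x ≠ y) :
    (x⁻¹ ^ m - x⁻¹ ^ (m + 1)) / (1 - x⁻¹ - x * y⁻¹ + y⁻¹) = x⁻¹ ^ m * y / (y - x) := by
  have hx1' : x - 1 ≠ 0 := sub_ne_zero.mpr hx1
  have hyx : y - x ≠ 0 := sub_ne_zero.mpr hxy.symm
  have hden : 1 - x⁻¹ - x * y⁻¹ + y⁻¹ = (x - 1) * (y - x) / (x * y) := by
    field_simp
    ring
  have hnum : x⁻¹ ^ m - x⁻¹ ^ (m + 1) = x⁻¹ ^ m * (x - 1) / x := by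
    rw [pow_succ]
    field_simp
  rw [hden, hnum, div_div_div_eq, div_eq_div_iff (by positivity) hyx]
  ring

theorem inv_pow_mul_div_add_inv_pow_mul_div (m : ℕ) {x y : K} (hx : x ≠ 0) (hy : y ≠ 0)
    (hxy : x ≠ y) :
    x⁻¹ ^ m * y / (y - x) + y⁻¹ ^ m * x / (x - y)
      = (x * y)⁻¹ ^ m * ∑ i ∈ range (m + 1), x ^ i * y ^ (m - i) := by
  have hxy' : x - y ≠ 0 := sub_ne_zero.mpr hxy
  have hgeom :
      ∑ i ∈ range (m + 1), x ^ i * y ^ (m - i) = (x ^ (m + 1) - y ^ (m + 1)) / (x - y) := by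
    rw [eq_div_iff hxy', ← geom_sum₂_mul, Nat.add_sub_cancel]
  rw [hgeom, inv_pow, inv_pow, inv_pow, mul_pow]
  field_simp
  ring

end Field

theorem algebraMap_fractionRing_ne_zero_of_eval_ne_zero {σ R : Type*} [CommRing R]
    {p : MvPolynomial σ R} (v : σ → R) (h : eval v p ≠ 0) :
    algebraMap (MvPolynomial σ R) (FractionRing (MvPolynomial σ R)) p ≠ 0 :=
  (map_ne_zero_iff _ (IsFractionRing.injective _ _)).mpr fun hp => h (by rw [hp, map_zero])

/-- Localization computation of `RΓ(𝒪_C(m))` for `m ≥ 0`, in the field `ℚ(t₁,t₂)`. -/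
theorem localization_RGamma_nonneg (m : ℕ) :
    let K := FractionRing (MvPolynomial (Fin 2) ℚ)
    let t₁ : K := algebraMap (MvPolynomial (Fin 2) ℚ) K (MvPolynomial.X 0)
    let t₂ : K := algebraMap (MvPolynomial (Fin 2) ℚ) K (MvPolynomial.X 1)
    (t₁⁻¹ ^ m - t₁⁻¹ ^ (m + 1)) / (1 - t₁⁻¹ - t₁ * t₂⁻¹ + t₂⁻¹)
      + (t₂⁻¹ ^ m - t₂⁻¹ ^ (m + 1)) / (1 - t₂⁻¹ - t₂ * t₁⁻¹ + t₁⁻¹)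
      = (t₁ * t₂)⁻¹ ^ m * ∑ i ∈ Finset.range (m + 1), t₁ ^ i * t₂ ^ (m - i) := by
  intro K t₁ t₂
  have ht₁ : t₁ ≠ 0 := algebraMap_fractionRing_ne_zero_of_eval_ne_zero ![1, 1] (by simp)
  have ht₂ : t₂ ≠ 0 := algebraMap_fractionRing_ne_zero_of_eval_ne_zero ![1, 1] (by simp)
  have ht₁_ne_one : t₁ ≠ 1 := by
    have h := algebraMap_fractionRing_ne_zero_of_eval_ne_zero
      (p := (X 0 - 1 : MvPolynomial (Fin 2) ℚ)) ![0, 0] (by simp)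
    rwa [map_sub, map_one, sub_ne_zero] at h
  have ht₂_ne_one : t₂ ≠ 1 := by
    have h := algebraMap_fractionRing_ne_zero_of_eval_ne_zero
      (p := (X 1 - 1 : MvPolynomial (Fin 2) ℚ)) ![0, 0] (by simp)
    rwa [map_sub, map_one, sub_ne_zero] at h
  have ht₁₂ : t₁ ≠ t₂ := by
    have h := algebraMap_fractionRing_ne_zero_of_eval_ne_zero
      (p := (X 0 - X 1 : MvPolynomial (Fin 2) ℚ)) ![1, 0] (by simp)
    rwa [map_sub, sub_ne_zero] at h
  rw [inv_pow_sub_inv_pow_succ_div m ht₁ ht₂ ht₁_ne_one ht₁₂,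
    inv_pow_sub_inv_pow_succ_div m ht₂ ht₁ ht₂_ne_one ht₁₂.symm,
    inv_pow_mul_div_add_inv_pow_mul_div m ht₁ ht₂ ht₁₂]
end

section
/- In the field of rational functions ℚ(t₁, t₂), for every integer m < 0 one has (t₁^{−m} − t₁^{−m−1})/(1 − t₁^{−1} − t₁t₂^{−1} + t₂^{−1}) + (t₂^{−m} − t₂^{−m−1})/(1 − t₂^{−1} − t₂t₁^{−1} + t₁^{−1}) = −t₁t₂ · ∑_{i=0}^{−m−2} t₁^i t₂^{−m−2−i}, where the sum is empty (hence the right-hand side is 0) when m = −1. -/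
/-!
Both denominators factor: `1 - a⁻¹ - a b⁻¹ + b⁻¹ = (a - 1)(b - a)/(a b)`, and the factor `a - 1`
cancels against the numerator `a^(n+1) - a^n = a^n (a - 1)`. The two fixed-point contributions then
add up to `-a b (a^n - b^n)/(a - b)`, which is `-a b` times the homogeneous geometric sum
`∑ aⁱ b^(n-1-i)`.
-/

open Finset

section Field

variable {F : Type*} [Field F] {a b : F}

theorem one_sub_inv_sub_mul_inv_add_inv (ha : a ≠ 0) (hb : b ≠ 0) :
    1 - a⁻¹ - a * b⁻¹ + b⁻¹ = (a - 1) * (b - a) / (a * b) := by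
  field_simp
  ring

theorem pow_succ_sub_pow_div_one_sub_inv_sub_mul_inv_add_inv (ha : a ≠ 0) (hb : b ≠ 0)
    (ha₁ : a ≠ 1) (n : ℕ) :
    (a ^ (n + 1) - a ^ n) / (1 - a⁻¹ - a * b⁻¹ + b⁻¹) = a ^ n * (a * b) / (b - a) := by
  rw [one_sub_inv_sub_mul_inv_add_inv ha hb, pow_succ, ← mul_sub_one]
  field_simp

theorem localization_sum_eq_neg_mul_geom_sum₂ (ha : a ≠ 0) (hb : b ≠ 0) (ha₁ : a ≠ 1)
    (hb₁ : b ≠ 1) (hab : a ≠ b) (n : ℕ) :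
    (a ^ (n + 1) - a ^ n) / (1 - a⁻¹ - a * b⁻¹ + b⁻¹)
      + (b ^ (n + 1) - b ^ n) / (1 - b⁻¹ - b * a⁻¹ + a⁻¹)
      = -(a * b) * ∑ i ∈ range n, a ^ i * b ^ (n - 1 - i) := by
  rw [pow_succ_sub_pow_div_one_sub_inv_sub_mul_inv_add_inv ha hb ha₁,
    pow_succ_sub_pow_div_one_sub_inv_sub_mul_inv_add_inv hb ha hb₁, geom₂_sum hab]
  field_simp
  ring

theorem sum_pow_mul_zpow_sub_one_sub (a b : F) (n : ℕ) :
    ∑ i ∈ range n, a ^ i * b ^ ((n : ℤ) - 1 - i) = ∑ i ∈ range n, a ^ i * b ^ (n - 1 - i) := by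
  refine sum_congr rfl fun i hi => ?_
  rw [mem_range] at hi
  rw [← zpow_natCast b, Nat.cast_sub (by omega), Nat.cast_sub (by omega), Nat.cast_one]

end Field

section MvPolynomial

open MvPolynomial

variable {σ R K : Type*} [CommRing R] [Nontrivial R] [CommRing K] [Algebra (MvPolynomial σ R) K]
  [IsFractionRing (MvPolynomial σ R) K]

theorem IsFractionRing.algebraMap_X_ne_zero (i : σ) :
    algebraMap (MvPolynomial σ R) K (X i) ≠ 0 :=
  (map_ne_zero_iff _ (IsFractionRing.injective _ _)).mpr (X_ne_zero i)

theorem IsFractionRing.algebraMap_X_ne_one (i : σ) :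
    algebraMap (MvPolynomial σ R) K (X i) ≠ 1 := by
  rw [← map_one (algebraMap (MvPolynomial σ R) K), (IsFractionRing.injective _ K).ne_iff]
  intro h
  simpa using congrArg constantCoeff h

theorem IsFractionRing.algebraMap_X_injective :
    Function.Injective fun i : σ => algebraMap (MvPolynomial σ R) K (X i) :=
  (IsFractionRing.injective _ K).comp X_injective

end MvPolynomial

/-- Localization computation of `RΓ(𝒪_C(m))` for `m < 0`, in the field `ℚ(t₁,t₂)`. -/
theorem localization_RGamma_neg (m : ℤ) (hm : m < 0) :
    let K := FractionRing (MvPolynomial (Fin 2) ℚ)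
    let t₁ : K := algebraMap (MvPolynomial (Fin 2) ℚ) K (MvPolynomial.X 0)
    let t₂ : K := algebraMap (MvPolynomial (Fin 2) ℚ) K (MvPolynomial.X 1)
    (t₁ ^ (-m) - t₁ ^ (-m - 1)) / (1 - t₁⁻¹ - t₁ * t₂⁻¹ + t₂⁻¹)
      + (t₂ ^ (-m) - t₂ ^ (-m - 1)) / (1 - t₂⁻¹ - t₂ * t₁⁻¹ + t₁⁻¹)
      = -(t₁ * t₂) * ∑ i ∈ Finset.range (-m - 1).toNat, t₁ ^ i * t₂ ^ (-m - 2 - (i : ℤ)) := by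
  intro K t₁ t₂
  obtain ⟨n, hn⟩ : ∃ n : ℕ, (-m - 1).toNat = n := ⟨_, rfl⟩
  have hexp₁ : -m = ((n + 1 : ℕ) : ℤ) := by omega
  have hexp₂ : -m - 1 = (n : ℤ) := by omega
  have hexp₃ : ∀ i : ℕ, -m - 2 - i = (n : ℤ) - 1 - i := fun i => by omega
  simp_rw [hn, hexp₃, hexp₂, hexp₁, zpow_natCast, sum_pow_mul_zpow_sub_one_sub]
  open IsFractionRing in
  exact localization_sum_eq_neg_mul_geom_sum₂ (algebraMap_X_ne_zero 0) (algebraMap_X_ne_zero 1)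
    (algebraMap_X_ne_one 0) (algebraMap_X_ne_one 1)
    ((algebraMap_X_injective (R := ℚ) (K := K)).ne zero_ne_one) n
end
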